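/- Let S = X - Y where X ~ Poisson(x) and Y ~ Poisson(y) are independent Poisson random variables, and let σ_S = sqrt(x + y) denote the standard deviation of S. Then for all integers i, σ_S · P(S = i) ≤ M, where M = sup_{u ≥ 0} sqrt(2u)·e^{-2u}·Σ_{k=0}^∞ (u^k/k!)^2; moreover the bound is attained with equality when x = y = ū and i = 0, where ū is the unique maximizer defining M. -/

import Mathlib

/-!
`P(X - Y = n) = e^{-(x+y)} Σ_{a - b = n} x^a y^b / (a! b!)` is, up to the factor `e^{-(x+y)}`,
the `n`-th Fourier coefficient of `t ↦ exp (x e^{it} + y e^{-it})`, whose modulus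
`exp ((x + y) cos t)` depends only on `x + y`. Bounding the coefficient by the mean of the modulus
gives `P(X - Y = n) ≤ P(X' - Y' = 0)` for `X', Y'` Poisson with the common mean `(x + y) / 2`, and
`σ_S · P(X' - Y' = 0) = M((x + y) / 2) ≤ M`, with equality for `x = y = ū`.
-/

open MeasureTheory ProbabilityTheory

/-- `M(u) = √(2u) e^{-2u} Σ_k (u^k/k!)²`. -/
noncomputable def Mfun (u : ℝ) : ℝ :=
  Real.sqrt (2 * u) * Real.exp (-2 * u) * ∑' k : ℕ, (u ^ k / (Nat.factorial k : ℝ)) ^ 2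

/-- `M = sup_{u ≥ 0} M(u)`. -/
noncomputable def Mconst : ℝ := sSup {r : ℝ | ∃ u : ℝ, 0 ≤ u ∧ r = Mfun u}

open scoped Nat Real ENNReal

theorem ENNReal.eq_of_forall_le_of_tsum_le {α : Type*} {f g : α → ℝ≥0∞}
    (hfg : ∀ a, f a ≤ g a) (hg : ∑' a, g a ≠ ∞) (hgf : ∑' a, g a ≤ ∑' a, f a) (a : α) :
    f a = g a := by
  by_contra hne
  have hf : ∑' a, f a ≠ ∞ := ne_top_of_le_ne_top hg (ENNReal.tsum_le_tsum hfg)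
  exact (ENNReal.tsum_lt_tsum hf hfg ((hfg a).lt_of_ne hne)).not_ge hgf

noncomputable def skellamSeries (x y : ℝ) (n : ℤ) : ℝ :=
  ∑' p : ℕ × ℕ, if (p.1 : ℤ) - p.2 = n then x ^ p.1 / p.1 ! * (y ^ p.2 / p.2 !) else 0

theorem summable_norm_pow_div_factorial_mul (x y : ℝ) :
    Summable fun p : ℕ × ℕ => ‖x ^ p.1 / p.1 ! * (y ^ p.2 / p.2 !)‖ := by
  have h (z : ℝ) : Summable fun k : ℕ => ‖z ^ k / (k ! : ℝ)‖ := by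
    simpa only [norm_div, norm_pow, Real.norm_eq_abs, Nat.abs_cast]
      using Real.summable_pow_div_factorial |z|
  exact Summable.mul_norm (f := fun k : ℕ => x ^ k / (k ! : ℝ))
    (g := fun k : ℕ => y ^ k / (k ! : ℝ)) (h x) (h y)

theorem summable_skellamSeries (x y : ℝ) (n : ℤ) :
    Summable fun p : ℕ × ℕ =>
      if (p.1 : ℤ) - p.2 = n then x ^ p.1 / p.1 ! * (y ^ p.2 / p.2 !) else 0 := by
  refine .of_norm_bounded (summable_norm_pow_div_factorial_mul x y) fun p => ?_
  split_ifs <;> simp only [norm_zero, norm_nonneg, le_refl]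

theorem skellamSeries_nonneg {x y : ℝ} (hx : 0 ≤ x) (hy : 0 ≤ y) (n : ℤ) :
    0 ≤ skellamSeries x y n :=
  tsum_nonneg fun p => by split_ifs <;> positivity

theorem skellamSeries_self_zero (u : ℝ) :
    skellamSeries u u 0 = ∑' k : ℕ, (u ^ k / k !) ^ 2 := by
  have hdiag : Function.Injective fun k : ℕ => (k, k) := fun a b h => (Prod.ext_iff.1 h).1
  rw [skellamSeries, ← hdiag.tsum_eq]
  · simp [sq]
  · rintro ⟨a, b⟩ hp
    have hab : a = b := by by_contra h; simp_all [sub_eq_zero]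
    exact ⟨a, by rw [hab]⟩

theorem tsum_ofReal_poisson {x : ℝ} (hx : 0 ≤ x) :
    ∑' k : ℕ, ENNReal.ofReal (Real.exp (-x) * x ^ k / k !) = 1 := by
  have h : HasSum (fun k : ℕ => Real.exp (-x) * x ^ k / k !) 1 :=
    hasSum_one_poissonMeasure ⟨x, hx⟩
  rw [← ENNReal.ofReal_tsum_of_nonneg (fun k => by positivity) h.summable, h.tsum_eq,
    ENNReal.ofReal_one]

section IndepNat

variable {Ω : Type*} [MeasurableSpace Ω] {μ : Measure Ω} {X Y : Ω → ℕ}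

theorem ProbabilityTheory.IndepFun.measure_sub_le_tsum (hXY : IndepFun X Y μ) (n : ℤ) :
    μ {ω | (X ω : ℤ) - Y ω = n} ≤ ∑' p : ℕ × ℕ,
      if (p.1 : ℤ) - p.2 = n then μ {ω | X ω = p.1} * μ {ω | Y ω = p.2} else 0 := by
  have hcover : {ω | (X ω : ℤ) - Y ω = n} ⊆ ⋃ p : ℕ × ℕ,
      if (p.1 : ℤ) - p.2 = n then X ⁻¹' {p.1} ∩ Y ⁻¹' {p.2} else ∅ := by
    intro ω hω
    exact Set.mem_iUnion.2 ⟨(X ω, Y ω), by simp_all⟩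
  refine (measure_mono hcover).trans ((measure_iUnion_le _).trans_eq (tsum_congr fun p => ?_))
  split_ifs
  · exact hXY.measure_inter_preimage_eq_mul _ _ (.singleton _) (.singleton _)
  · exact measure_empty

theorem ProbabilityTheory.IndepFun.measure_sub_eq_tsum [IsProbabilityMeasure μ]
    (hXY : IndepFun X Y μ) (hX : ∑' a, μ {ω | X ω = a} = 1) (hY : ∑' b, μ {ω | Y ω = b} = 1)
    (n : ℤ) :
    μ {ω | (X ω : ℤ) - Y ω = n} = ∑' p : ℕ × ℕ,
      if (p.1 : ℤ) - p.2 = n then μ {ω | X ω = p.1} * μ {ω | Y ω = p.2} else 0 := by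
  -- The level sets of `X` and `Y` need not be measurable, so `μ` is only subadditive on them:
  -- equality comes from comparing total masses.
  have htotal : ∑' m : ℤ, ∑' p : ℕ × ℕ,
      (if (p.1 : ℤ) - p.2 = m then μ {ω | X ω = p.1} * μ {ω | Y ω = p.2} else 0) = 1 := by
    rw [ENNReal.tsum_comm]
    simp only [eq_comm (b := (_ : ℤ)), tsum_ite_eq]
    rw [ENNReal.tsum_prod (f := fun a b => μ {ω | X ω = a} * μ {ω | Y ω = b})]
    simp only [ENNReal.tsum_mul_left, hY, mul_one, hX]
  have hmass : 1 ≤ ∑' m : ℤ, μ {ω | (X ω : ℤ) - Y ω = m} := calc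
    1 = μ (⋃ m : ℤ, {ω | (X ω : ℤ) - Y ω = m}) := by
      rw [← measure_univ (μ := μ)]
      congr
      exact (Set.iUnion_eq_univ_iff.2 fun ω => ⟨(X ω : ℤ) - Y ω, rfl⟩).symm
    _ ≤ _ := measure_iUnion_le _
  exact ENNReal.eq_of_forall_le_of_tsum_le hXY.measure_sub_le_tsum
    (htotal ▸ ENNReal.one_ne_top) (htotal ▸ hmass) n

theorem ProbabilityTheory.IndepFun.measure_sub_eq_ofReal_skellamSeries [IsProbabilityMeasure μ]
    (hXY : IndepFun X Y μ) {x y : ℝ} (hx : 0 ≤ x) (hy : 0 ≤ y)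
    (hX : ∀ k : ℕ, μ {ω | X ω = k} = ENNReal.ofReal (Real.exp (-x) * x ^ k / k !))
    (hY : ∀ k : ℕ, μ {ω | Y ω = k} = ENNReal.ofReal (Real.exp (-y) * y ^ k / k !)) (n : ℤ) :
    μ {ω | (X ω : ℤ) - Y ω = n} = ENNReal.ofReal (Real.exp (-(x + y)) * skellamSeries x y n) := by
  rw [hXY.measure_sub_eq_tsum (by simp only [hX, tsum_ofReal_poisson hx])
      (by simp only [hY, tsum_ofReal_poisson hy]), skellamSeries, ← tsum_mul_left,
    ENNReal.ofReal_tsum_of_nonneg (fun p => by split_ifs <;> positivity)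
      ((summable_skellamSeries x y n).mul_left _)]
  refine tsum_congr fun p => ?_
  split_ifs
  · rw [hX, hY, ← ENNReal.ofReal_mul (by positivity), neg_add, Real.exp_add]
    ring_nf
  · simp

end IndepNat

section Fourier

open Complex

theorem integral_exp_int_mul_I (k : ℤ) :
    ∫ t in Set.Ioc (-π) π, cexp ((k * t : ℝ) * I) = if k = 0 then ((2 * π : ℝ) : ℂ) else 0 := by
  rw [← intervalIntegral.integral_of_le (by linarith [Real.pi_pos])]
  split_ifs with hk
  · simp [hk, two_mul]
  · have hkI : (k : ℂ) * I ≠ 0 := mul_ne_zero (by exact_mod_cast hk) I_ne_zero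
    have hperiod : cexp (k * I * π) = cexp (k * I * (-π : ℝ)) := by
      rw [show (k : ℂ) * I * π = k * I * (-π : ℝ) + k * (2 * π * I) by push_cast; ring,
        exp_add, exp_int_mul_two_pi_mul_I, mul_one]
    simp only [ofReal_mul, ofReal_intCast, mul_right_comm _ _ I]
    rw [integral_exp_mul_complex hkI, hperiod, sub_self, zero_div]

theorem hasSum_ofReal_mul_exp_mul_I (x s : ℝ) :
    HasSum (fun a : ℕ => ((x ^ a / a ! : ℝ) : ℂ) * cexp ((a * s : ℝ) * I))
      (cexp (x * cexp (s * I))) := by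
  have hterm (a : ℕ) : ((x ^ a / a ! : ℝ) : ℂ) * cexp ((a * s : ℝ) * I) =
      (x * cexp (s * I)) ^ a / a ! := by
    rw [mul_pow, ← exp_nat_mul]
    push_cast
    ring_nf
  simp only [hterm]
  rw [exp_eq_exp_ℂ]
  exact NormedSpace.expSeries_div_hasSum_exp _

theorem summable_norm_ofReal_mul_exp_mul_I {ι : Type*} {c : ι → ℝ} (hc : Summable fun i => ‖c i‖)
    (r : ι → ℝ) : Summable fun i => ‖(c i : ℂ) * cexp (r i * I)‖ := by
  simpa only [norm_mul, norm_real, norm_exp_ofReal_mul_I, mul_one] using hc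

theorem exp_add_exp_neg_sub_eq_tsum (x y : ℝ) (n : ℤ) (t : ℝ) :
    cexp (x * cexp (t * I) + y * cexp (-t * I) - (n * t : ℝ) * I) =
      ∑' p : ℕ × ℕ, ((x ^ p.1 / p.1 ! * (y ^ p.2 / p.2 !) : ℝ) : ℂ) *
        cexp ((((p.1 : ℤ) - p.2 - n : ℤ) * t : ℝ) * I) := by
  have hx := hasSum_ofReal_mul_exp_mul_I x t
  have hy := hasSum_ofReal_mul_exp_mul_I y (-t)
  have hnorm (z s : ℝ) := summable_norm_ofReal_mul_exp_mul_I
    (c := fun a : ℕ => z ^ a / (a ! : ℝ)) (by simpa only [norm_div, norm_pow, Real.norm_eq_abs,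
      Nat.abs_cast] using Real.summable_pow_div_factorial |z|) (fun a => a * s)
  rw [sub_eq_add_neg, exp_add, exp_add, ← hx.tsum_eq, ← ofReal_neg, ← hy.tsum_eq,
    tsum_mul_tsum_of_summable_norm (hnorm x t) (hnorm y (-t)), ← tsum_mul_right]
  refine tsum_congr fun p => ?_
  have hexp : cexp ((p.1 * t : ℝ) * I) * cexp ((p.2 * -t : ℝ) * I) * cexp (-((n * t : ℝ) * I)) =
      cexp ((((p.1 : ℤ) - p.2 - n : ℤ) * t : ℝ) * I) := by
    rw [← exp_add, ← exp_add]
    push_cast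
    ring_nf
  rw [← hexp]
  push_cast
  ring

theorem integral_exp_add_exp_neg_sub (x y : ℝ) (n : ℤ) :
    ∫ t in Set.Ioc (-π) π, cexp (x * cexp (t * I) + y * cexp (-t * I) - (n * t : ℝ) * I) =
      ((2 * π * skellamSeries x y n : ℝ) : ℂ) := by
  set c : ℕ × ℕ → ℝ := fun p => x ^ p.1 / p.1 ! * (y ^ p.2 / p.2 !)
  set k : ℕ × ℕ → ℤ := fun p => (p.1 : ℤ) - p.2 - n
  have hint (p : ℕ × ℕ) : Integrable (fun t : ℝ => (c p : ℂ) * cexp ((k p * t : ℝ) * I))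
      (volume.restrict (Set.Ioc (-π) π)) :=
    (by fun_prop : Continuous _).integrableOn_Ioc
  have hsum : Summable fun p => ∫ t in Set.Ioc (-π) π, ‖(c p : ℂ) * cexp ((k p * t : ℝ) * I)‖ := by
    simp only [norm_mul, norm_real, norm_exp_ofReal_mul_I, mul_one, integral_const, smul_eq_mul]
    exact (summable_norm_pow_div_factorial_mul x y).mul_left _
  simp only [exp_add_exp_neg_sub_eq_tsum]
  rw [← integral_tsum_of_summable_integral_norm hint hsum, skellamSeries, ofReal_mul,
    ofReal_tsum, ← tsum_mul_left]
  refine tsum_congr fun p => ?_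
  rw [integral_const_mul, integral_exp_int_mul_I]
  simp only [c, k, sub_eq_zero]
  split_ifs <;> push_cast <;> ring

theorem norm_exp_add_exp_neg_sub (x y : ℝ) (n : ℤ) (t : ℝ) :
    ‖cexp (x * cexp (t * I) + y * cexp (-t * I) - (n * t : ℝ) * I)‖ =
      Real.exp ((x + y) * Real.cos t) := by
  rw [norm_exp, ← ofReal_neg]
  simp only [sub_re, add_re, re_ofReal_mul, exp_ofReal_mul_I_re, Real.cos_neg, mul_I_re,
    ofReal_im, neg_zero, sub_zero]
  ring_nf

theorem exp_add_exp_neg_self (u t : ℝ) :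
    cexp (u * cexp (t * I) + u * cexp (-t * I) - ((0 : ℤ) * t : ℝ) * I) =
      Real.exp (2 * u * Real.cos t) := by
  rw [ofReal_exp, ← mul_add, ← two_cos]
  push_cast
  ring_nf

theorem skellamSeries_le (x y : ℝ) (n : ℤ) :
    skellamSeries x y n ≤ skellamSeries ((x + y) / 2) ((x + y) / 2) 0 := by
  have hmid : ((2 * π * skellamSeries ((x + y) / 2) ((x + y) / 2) 0 : ℝ) : ℂ) =
      ((∫ t in Set.Ioc (-π) π, Real.exp ((x + y) * Real.cos t) : ℝ) : ℂ) := by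
    rw [← integral_exp_add_exp_neg_sub, ← integral_complex_ofReal]
    simp only [exp_add_exp_neg_self]
    ring_nf
  have key := calc
    2 * π * skellamSeries x y n ≤ ‖((2 * π * skellamSeries x y n : ℝ) : ℂ)‖ := by
      rw [norm_real]; exact Real.le_norm_self _
    _ ≤ ∫ t in Set.Ioc (-π) π, Real.exp ((x + y) * Real.cos t) := by
      rw [← integral_exp_add_exp_neg_sub]
      refine (norm_integral_le_integral_norm _).trans_eq ?_
      simp only [norm_exp_add_exp_neg_sub]
    _ = 2 * π * skellamSeries ((x + y) / 2) ((x + y) / 2) 0 := (ofReal_injective hmid).symm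
  exact le_of_mul_le_mul_left key (by positivity)

end Fourier

theorem Mfun_eq_skellamSeries (u : ℝ) :
    Mfun u = Real.sqrt (2 * u) * Real.exp (-2 * u) * skellamSeries u u 0 := by
  rw [Mfun, skellamSeries_self_zero]

theorem poisson_difference_bound_general
    {Ω : Type*} [MeasurableSpace Ω] (μ : Measure Ω) [IsProbabilityMeasure μ]
    (x y : ℝ) (hx : 0 ≤ x) (hy : 0 ≤ y)
    (X Y : Ω → ℕ) (hXY : IndepFun X Y μ)
    (hX : ∀ k : ℕ, μ {ω | X ω = k} =
      ENNReal.ofReal (Real.exp (-x) * x ^ k / (Nat.factorial k : ℝ)))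
    (hY : ∀ k : ℕ, μ {ω | Y ω = k} =
      ENNReal.ofReal (Real.exp (-y) * y ^ k / (Nat.factorial k : ℝ)))
    (ub : ℝ) (hub0 : 0 ≤ ub)
    (hubmax : ∀ u : ℝ, 0 ≤ u → Mfun u ≤ Mfun ub) :
    (∀ i : ℤ, Real.sqrt (x + y) *
        (μ {ω | (X ω : ℤ) - (Y ω : ℤ) = i}).toReal ≤ Mconst) ∧
    (x = ub → y = ub →
      Real.sqrt (x + y) * (μ {ω | (X ω : ℤ) - (Y ω : ℤ) = 0}).toReal = Mconst) := by
  have hM : Mconst = Mfun ub :=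
    IsGreatest.csSup_eq ⟨⟨ub, hub0, rfl⟩, by rintro _ ⟨u, hu, rfl⟩; exact hubmax u hu⟩
  have hS (n : ℤ) : (μ {ω | (X ω : ℤ) - (Y ω : ℤ) = n}).toReal =
      Real.exp (-(x + y)) * skellamSeries x y n := by
    rw [hXY.measure_sub_eq_ofReal_skellamSeries hx hy hX hY,
      ENNReal.toReal_ofReal (mul_nonneg (Real.exp_pos _).le (skellamSeries_nonneg hx hy n))]
  refine ⟨fun i => ?_, fun hxu hyu => ?_⟩
  · calc Real.sqrt (x + y) * (μ {ω | (X ω : ℤ) - (Y ω : ℤ) = i}).toReal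
        ≤ Real.sqrt (x + y) * (Real.exp (-(x + y)) *
            skellamSeries ((x + y) / 2) ((x + y) / 2) 0) := by
          rw [hS]; gcongr; exact skellamSeries_le x y i
      _ = Mfun ((x + y) / 2) := by rw [Mfun_eq_skellamSeries]; ring_nf
      _ ≤ Mconst := hM ▸ hubmax _ (by positivity)
  · rw [hS, hM, Mfun_eq_skellamSeries, hxu, hyu]
    ring_nf

theorem poisson_difference_bound
    {Ω : Type*} [MeasurableSpace Ω] (μ : Measure Ω) [IsProbabilityMeasure μ]
    (x y : ℝ) (hx : 0 ≤ x) (hy : 0 ≤ y)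
    (X Y : Ω → ℕ) (hXY : IndepFun X Y μ)
    (hX : ∀ k : ℕ, μ {ω | X ω = k} =
      ENNReal.ofReal (Real.exp (-x) * x ^ k / (Nat.factorial k : ℝ)))
    (hY : ∀ k : ℕ, μ {ω | Y ω = k} =
      ENNReal.ofReal (Real.exp (-y) * y ^ k / (Nat.factorial k : ℝ)))
    (ub : ℝ) (hub0 : 0 ≤ ub)
    (hubmax : ∀ u : ℝ, 0 ≤ u → Mfun u ≤ Mfun ub)
    (hubuniq : ∀ v : ℝ, 0 ≤ v → (∀ u : ℝ, 0 ≤ u → Mfun u ≤ Mfun v) → v = ub) :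
    (∀ i : ℤ, Real.sqrt (x + y) *
        (μ {ω | (X ω : ℤ) - (Y ω : ℤ) = i}).toReal ≤ Mconst) ∧
    (x = ub → y = ub →
      Real.sqrt (x + y) * (μ {ω | (X ω : ℤ) - (Y ω : ℤ) = 0}).toReal = Mconst) :=
  poisson_difference_bound_general μ x y hx hy X Y hXY hX hY ub hub0 hubmax
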